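/- arXiv:math/0011271 — 3 statements merged into one kernel-verified Lean document; each statement's English description precedes it below -/
import Mathlib

section
/- Let p be an odd prime and n ≥ 1 a natural number. Then p does not divide the binomial coefficient C(((p−1)/2)·p^{n−1}, p^{n−1}). -/
lemma aux_not_dvd_choose (p : ℕ) (hp : p.Prime) (hodd : Odd p) :
    ∀ e : ℕ, ¬ p ∣ (((p - 1) / 2) * p ^ e).choose (p ^ e) := by
  haveI : Fact p.Prime := ⟨hp⟩
  have hp3 : 3 ≤ p := by
    rcases hodd with ⟨k, hk⟩
    have := hp.two_le
    omega
  intro e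
  induction e with
  | zero =>
    simp only [pow_zero, mul_one, Nat.choose_one_right]
    intro h
    have := Nat.le_of_dvd (by omega) h
    omega
  | succ e ih =>
    intro h
    apply ih
    have hmod := Choose.choose_modEq_choose_mod_mul_choose_div_nat (p := p)
      (n := ((p - 1) / 2) * p ^ (e + 1)) (k := p ^ (e + 1))
    have h1 : ((p - 1) / 2) * p ^ (e + 1) % p = 0 := by
      rw [pow_succ, ← mul_assoc]; exact Nat.mul_mod_left _ _
    have h2 : p ^ (e + 1) % p = 0 := by
      rw [pow_succ]; exact Nat.mul_mod_left _ _
    have h3 : ((p - 1) / 2) * p ^ (e + 1) / p = ((p - 1) / 2) * p ^ e := by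
      rw [pow_succ, ← mul_assoc, Nat.mul_div_cancel _ (by omega)]
    have h4 : p ^ (e + 1) / p = p ^ e := by
      rw [pow_succ, Nat.mul_div_cancel _ (by omega)]
    rw [h1, h2, h3, h4, Nat.choose_self, one_mul] at hmod
    rw [← Nat.modEq_zero_iff_dvd] at h ⊢
    exact hmod.symm.trans h

/-- For an odd prime `p` and `n ≥ 1`, `p` does not divide the binomial coefficient
`C(((p-1)/2)·p^{n-1}, p^{n-1})`. -/
theorem not_dvd_choose_half_mul_pow (p : ℕ) (hp : p.Prime) (hodd : Odd p)
    (n : ℕ) (hn : 1 ≤ n) :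
    ¬ p ∣ (((p - 1) / 2) * p ^ (n - 1)).choose (p ^ (n - 1)) := by
  exact aux_not_dvd_choose p hp hodd (n - 1)
end

section
/- Let p be a prime, d a natural number, and let V = (ℤ/pℤ)^d be the elementary abelian p-group of rank d (written as functions Fin d → ℤ/pℤ under addition). Let C be a group, let χ : C → (ℤ/pℤ)^× be a group homomorphism, and let φ : C → Aut(V) be the action by homotheties, φ(c)(v) = χ(c) · v. Form the semidirect product G = V ⋊_φ C. Then every finite subset S of G that generates G as a group satisfies |S| ≥ d. -/
/-- Let `V = (ℤ/pℤ)^d`, let `χ : C → (ℤ/pℤ)ˣ` be a homomorphism and let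
`φ : C → Aut(V)` be the action by homotheties `φ(c)(v) = χ(c) • v`. Then every finite
generating set of the semidirect product `V ⋊[φ] C` has at least `d` elements. -/
theorem semidirect_homothety_generators (p : ℕ) (hp : p.Prime) (d : ℕ)
    (C : Type*) [Group C] (χ : C →* (ZMod p)ˣ)
    (φ : C →* MulAut (Multiplicative (Fin d → ZMod p)))
    (hφ : ∀ (c : C) (v : Fin d → ZMod p),
      Multiplicative.toAdd (φ c (Multiplicative.ofAdd v)) = (χ c : ZMod p) • v)
    (S : Finset (SemidirectProduct (Multiplicative (Fin d → ZMod p)) C φ))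
    (hS : Subgroup.closure (S : Set (SemidirectProduct (Multiplicative (Fin d → ZMod p)) C φ)) = ⊤) :
    d ≤ S.card := by
  haveI : Fact p.Prime := ⟨hp⟩
  set V := Fin d → ZMod p
  set T : Finset V := S.image (fun g => Multiplicative.toAdd g.left) with hT
  set W : Submodule (ZMod p) V := Submodule.span (ZMod p) (T : Set V) with hW
  have hφ' : ∀ (c : C) (m : Multiplicative V),
      Multiplicative.toAdd (φ c m) = (χ c : ZMod p) • Multiplicative.toAdd m := by
    intro c m
    simpa using hφ c (Multiplicative.toAdd m)
  have key : ∀ g : SemidirectProduct (Multiplicative V) C φ, g ∈ Subgroup.closure (S : Set (SemidirectProduct (Multiplicative V) C φ)) → Multiplicative.toAdd g.left ∈ W := by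
    intro g hg
    induction hg using Subgroup.closure_induction with
    | mem x hx =>
        exact Submodule.subset_span (by
          simp only [hT, Finset.coe_image, Set.mem_image, Finset.mem_coe]
          exact ⟨x, hx, rfl⟩)
    | one => simp
    | mul x y hx hy ihx ihy =>
        rw [SemidirectProduct.mul_left]
        have : Multiplicative.toAdd (x.left * φ x.right y.left)
            = Multiplicative.toAdd x.left + (χ x.right : ZMod p) • Multiplicative.toAdd y.left := by
          rw [toAdd_mul, hφ']
        rw [this]
        exact W.add_mem ihx (W.smul_mem _ ihy)
    | inv x hx ihx =>
        rw [SemidirectProduct.inv_left]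
        rw [hφ']
        refine W.smul_mem _ ?_
        simpa using W.neg_mem ihx
  have hWtop : W = ⊤ := by
    rw [eq_top_iff]
    intro v _
    have := key (SemidirectProduct.inl (Multiplicative.ofAdd v)) (by rw [hS]; trivial)
    simpa using this
  have h1 : Module.finrank (ZMod p) V = d := Module.finrank_fin_fun (ZMod p)
  have h2 : Module.finrank (ZMod p) W ≤ T.card := finrank_span_finset_le_card T
  have h3 : Module.finrank (ZMod p) W = d := by
    rw [hWtop, finrank_top, h1]
  calc d = Module.finrank (ZMod p) W := h3.symm
    _ ≤ T.card := h2
    _ ≤ S.card := Finset.card_image_le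
end

section
/- Let p be a prime, m ≥ 1 and n ≥ 0 natural numbers, and let Λ = ℤ_p⟦T⟧. Then the quotient ring Λ/(p^m, (1+T)^{p^n} − 1) of Λ by the ideal generated by p^m and (1+T)^{p^n} − 1 is finite of cardinality p^{m·p^n}. -/
/-!
The polynomial `ω = (1 + X) ^ p ^ n - 1` is distinguished at `(p)`: it is monic of degree `p ^ n`
and its other coefficients are binomial coefficients `(p ^ n).choose i`, all divisible by `p`.
Weierstrass division therefore identifies `ℤ_[p]⟦X⟧ ⧸ (ω)` with `ℤ_[p][X] ⧸ (ω)`, so the quotient by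
`(p ^ m, ω)` is `(ℤ_[p] ⧸ (p ^ m))[X] ⧸ (ω)`, a free module of rank `p ^ n` over a ring with
`p ^ m` elements.
-/

open Polynomial IsLocalRing
open scoped PowerSeries

namespace Polynomial

variable {R S : Type*} [CommRing R] [CommRing S]

theorem Monic.natCard_adjoinRoot_map {g : R[X]} (hg : g.Monic) (f : R →+* S) :
    Nat.card (AdjoinRoot (g.map f)) = Nat.card S ^ g.natDegree := by
  rcases subsingleton_or_nontrivial S with hS | hS
  · have : Subsingleton (AdjoinRoot (g.map f)) := AdjoinRoot.mk_surjective.subsingleton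
    rw [Nat.card_of_subsingleton 0, Nat.card_of_subsingleton 0, one_pow]
  · let b := (AdjoinRoot.powerBasis' (hg.map f)).basis
    rw [Nat.card_congr b.equivFun.toEquiv, Nat.card_fun, Nat.card_fin,
      AdjoinRoot.powerBasis'_dim, hg.natDegree_map]

theorem natDegree_one_add_X_pow_sub_one [Nontrivial R] (k : ℕ) :
    ((1 + X : R[X]) ^ k - 1).natDegree = k := by
  rw [add_comm, ← C_1, natDegree_sub_C, natDegree_pow_X_add_C]

theorem monic_one_add_X_pow_sub_one {k : ℕ} (hk : k ≠ 0) : ((1 + X : R[X]) ^ k - 1).Monic := by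
  nontriviality R
  have hmonic : ((X + C 1 : R[X]) ^ k).Monic := (monic_X_add_C 1).pow k
  rw [add_comm, ← C_1]
  refine hmonic.sub_of_left (degree_C_le.trans_lt ?_)
  rw [degree_eq_natDegree hmonic.ne_zero, natDegree_pow_X_add_C]
  exact_mod_cast Nat.pos_of_ne_zero hk

theorem isDistinguishedAt_one_add_X_pow_sub_one {p : ℕ} [hp : Fact p.Prime] {I : Ideal R}
    (hpI : (p : R) ∈ I) (n : ℕ) : ((1 + X : R[X]) ^ p ^ n - 1).IsDistinguishedAt I := by
  refine ⟨⟨fun {i} hi ↦ ?_⟩, monic_one_add_X_pow_sub_one (pow_ne_zero _ hp.out.ne_zero)⟩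
  nontriviality R
  rw [natDegree_one_add_X_pow_sub_one] at hi
  rw [coeff_sub, add_comm, coeff_X_add_one_pow, coeff_one]
  rcases eq_or_ne i 0 with rfl | hi0
  · simp
  · obtain ⟨c, hc⟩ := hp.out.dvd_choose_pow hi0 hi.ne
    rw [if_neg hi0, sub_zero, hc, Nat.cast_mul]
    exact I.mul_mem_right _ hpI

variable {A : Type*} [CommRing A] {I : Ideal A} [IsAdicComplete I A] {g : A[X]}

noncomputable def IsDistinguishedAt.quotientSpanPairEquiv (hg : g.IsDistinguishedAt I) (a : A) :
    A⟦X⟧ ⧸ Ideal.span {PowerSeries.C a, (g : A⟦X⟧)} ≃+*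
      AdjoinRoot (g.map (Ideal.Quotient.mk (Ideal.span {a}))) :=
  (Ideal.quotEquivOfEq (by rw [Ideal.span_insert, sup_comm])).trans <|
    (DoubleQuot.quotQuotEquivQuotSup (Ideal.span {(g : A⟦X⟧)})
      (Ideal.span {PowerSeries.C a})).symm.trans <|
    (Ideal.quotientEquiv _ ((Ideal.span {a}).map (AdjoinRoot.of g))
      hg.algEquivQuotient.symm.toRingEquiv (by
        simp only [Ideal.map_span, Set.image_singleton]
        congr 2
        exact (hg.algEquivQuotient.symm.commutes a).symm)).trans <|
    AdjoinRoot.quotAdjoinRootEquivQuotPolynomialQuot (Ideal.span {a}) g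

end Polynomial

theorem PadicInt.natCard_quotient_span_p_pow (p : ℕ) [Fact p.Prime] (m : ℕ) :
    Nat.card (ℤ_[p] ⧸ Ideal.span {(p : ℤ_[p]) ^ m}) = p ^ m := by
  rw [← ker_toZModPow, Nat.card_congr
    (RingHom.quotientKerEquivOfSurjective (ZMod.ringHom_surjective (toZModPow m))).toEquiv,
    Nat.card_zmod]

theorem iwasawa_quotient_card_general (p : ℕ) [Fact p.Prime] (m n : ℕ) :
    Finite (PowerSeries ℤ_[p] ⧸
        Ideal.span ({(p : PowerSeries ℤ_[p]) ^ m,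
          (1 + PowerSeries.X) ^ p ^ n - 1} : Set (PowerSeries ℤ_[p]))) ∧
    Nat.card (PowerSeries ℤ_[p] ⧸
        Ideal.span ({(p : PowerSeries ℤ_[p]) ^ m,
          (1 + PowerSeries.X) ^ p ^ n - 1} : Set (PowerSeries ℤ_[p]))) = p ^ (m * p ^ n) := by
  have hω := isDistinguishedAt_one_add_X_pow_sub_one
    ((mem_maximalIdeal _).mpr (PadicInt.p_nonunit (p := p))) n
  have hgens : ({(p : ℤ_[p]⟦X⟧) ^ m, (1 + PowerSeries.X) ^ p ^ n - 1} : Set ℤ_[p]⟦X⟧) =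
      {PowerSeries.C ((p : ℤ_[p]) ^ m), (((1 + X) ^ p ^ n - 1 : ℤ_[p][X]) : ℤ_[p]⟦X⟧)} := by
    simp
  have hcard : Nat.card (ℤ_[p]⟦X⟧ ⧸ Ideal.span
      {(p : ℤ_[p]⟦X⟧) ^ m, (1 + PowerSeries.X) ^ p ^ n - 1}) = p ^ (m * p ^ n) := by
    rw [hgens, Nat.card_congr (hω.quotientSpanPairEquiv _).toEquiv,
      hω.monic.natCard_adjoinRoot_map, PadicInt.natCard_quotient_span_p_pow,
      natDegree_one_add_X_pow_sub_one, pow_mul]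
  exact ⟨Nat.finite_of_card_ne_zero (hcard ▸ pow_ne_zero _ (Fact.out : p.Prime).ne_zero), hcard⟩

/-- For a prime `p`, `m ≥ 1` and `n ≥ 0`, the quotient of `Λ = ℤ_p⟦T⟧` by the ideal
generated by `p^m` and `(1+T)^(p^n) - 1` is finite of cardinality `p^(m·p^n)`. -/
theorem iwasawa_quotient_card (p : ℕ) [Fact p.Prime] (m n : ℕ) (hm : 1 ≤ m) :
    Finite (PowerSeries ℤ_[p] ⧸
        Ideal.span ({(p : PowerSeries ℤ_[p]) ^ m,
          (1 + PowerSeries.X) ^ p ^ n - 1} : Set (PowerSeries ℤ_[p]))) ∧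
    Nat.card (PowerSeries ℤ_[p] ⧸
        Ideal.span ({(p : PowerSeries ℤ_[p]) ^ m,
          (1 + PowerSeries.X) ^ p ^ n - 1} : Set (PowerSeries ℤ_[p]))) = p ^ (m * p ^ n) :=
  iwasawa_quotient_card_general p m n
end
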